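/- arXiv:2401.13603 — 2 statements merged into one kernel-verified Lean document; each statement's English description precedes it below -/
import Mathlib

section
/- Let M be an n×n matrix over ℂ[[q]] whose discriminant Δ(M) = Res(p_M, p_M') is nonzero, and let v be the q-adic order (valuation) of Δ(M). Then for every natural number α > v, the truncated matrix M_{<α}, obtained by truncating every entry of M modulo q^α (keeping only the coefficients of q^d for 0 ≤ d < α), has nonzero discriminant Δ(M_{<α}) ≠ 0; in particular the characteristic polynomial of M_{<α}, viewed over the field of formal Laurent series ℂ((q)), is squarefree. -/
/-- The resultant of two polynomials `p` and `q`, computed as the determinant of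
the Sylvester matrix built with respect to the degree bounds `m` for `p` and
`n` for `q`. -/
noncomputable def sylvesterRes {R : Type*} [CommRing R] (m n : ℕ)
    (p q : Polynomial R) : R :=
  (Matrix.of (fun i j : Fin (m + n) =>
    if (i : ℕ) < n then
      (if (j : ℕ) ≤ m + (i : ℕ) then p.coeff (m + (i : ℕ) - (j : ℕ)) else 0)
    else
      (if (j : ℕ) ≤ ((i : ℕ) - n) + n then
        q.coeff (((i : ℕ) - n) + n - (j : ℕ)) else 0))).det

/-- The discriminant `Δ(M) = Res(p_M, p_M')` of a square matrix `M`. -/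
noncomputable def matDiscrim {R : Type*} [CommRing R] {n : ℕ}
    (M : Matrix (Fin n) (Fin n) R) : R :=
  sylvesterRes n (n - 1) M.charpoly M.charpoly.derivative

lemma sylvesterRes_map {R S : Type*} [CommRing R] [CommRing S] (f : R →+* S)
    (m n : ℕ) (p q : Polynomial R) :
    sylvesterRes m n (p.map f) (q.map f) = f (sylvesterRes m n p q) := by
  unfold sylvesterRes
  rw [RingHom.map_det]
  congr 1
  ext i j
  simp [RingHom.mapMatrix_apply, Matrix.map_apply, Polynomial.coeff_map, apply_ite f]

lemma matDiscrim_map {R S : Type*} [CommRing R] [CommRing S] (f : R →+* S)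
    {n : ℕ} (M : Matrix (Fin n) (Fin n) R) :
    matDiscrim (M.map f) = f (matDiscrim M) := by
  unfold matDiscrim
  rw [Matrix.charpoly_map, Polynomial.derivative_map, sylvesterRes_map]

lemma coeff_mul_eq_sum_range {K : Type*} [CommRing K] (c r : Polynomial K) (N k : ℕ)
    (hc : c.natDegree < N) :
    (c * r).coeff k
      = ∑ s ∈ Finset.range N, (if s ≤ k then c.coeff s * r.coeff (k - s) else 0) := by
  rw [Polynomial.coeff_mul, Finset.Nat.sum_antidiagonal_eq_sum_range_succ_mk]
  have e1 : ∑ s ∈ Finset.range (k + 1), c.coeff s * r.coeff (k - s)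
      = ∑ s ∈ Finset.range (k + 1), (if s ≤ k then c.coeff s * r.coeff (k - s) else 0) :=
    Finset.sum_congr rfl fun s hs => by
      rw [if_pos (by simpa [Nat.lt_succ_iff] using hs)]
  rw [e1]
  rcases le_or_gt N (k + 1) with hNk | hNk
  · refine (Finset.sum_subset (Finset.range_subset_range.2 hNk) ?_).symm
    intro s _ hns
    simp only [Finset.mem_range, not_lt] at hns
    have : c.coeff s = 0 := Polynomial.coeff_eq_zero_of_natDegree_lt (by omega)
    split_ifs <;> simp [this]
  · refine Finset.sum_subset (Finset.range_subset_range.2 hNk.le) ?_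
    intro s _ hns
    simp only [Finset.mem_range, not_lt] at hns
    rw [if_neg (by omega)]

lemma sylvesterRes_eq_zero {K : Type*} [Field K] (m n : ℕ) (p q a b : Polynomial K)
    (hp : p.natDegree ≤ m) (hq : q.natDegree ≤ n)
    (ha : a.natDegree < n) (hb : b.natDegree < m)
    (ha0 : a ≠ 0) (hab : a * p + b * q = 0) :
    sylvesterRes m n p q = 0 := by
  classical
  apply Matrix.exists_vecMul_eq_zero_iff.mp
  refine ⟨fun i : Fin (m + n) => if (i : ℕ) < n then a.coeff (n - 1 - (i : ℕ))
      else b.coeff (m + n - 1 - (i : ℕ)), ?_, ?_⟩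
  · intro hC
    have h2 : (if (n - 1 - a.natDegree) < n then a.coeff (n - 1 - (n - 1 - a.natDegree))
        else b.coeff (m + n - 1 - (n - 1 - a.natDegree))) = 0 :=
      congrFun hC ⟨n - 1 - a.natDegree, by omega⟩
    rw [if_pos (by omega), show n - 1 - (n - 1 - a.natDegree) = a.natDegree by omega] at h2
    exact Polynomial.leadingCoeff_ne_zero.mpr ha0 h2
  · funext j
    have hj : (j : ℕ) < m + n := j.isLt
    set k := m + n - 1 - (j : ℕ) with hk
    show (∑ i : Fin (m + n),
        (if (i : ℕ) < n then a.coeff (n - 1 - (i : ℕ)) else b.coeff (m + n - 1 - (i : ℕ))) *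
        (if (i : ℕ) < n then
          (if (j : ℕ) ≤ m + (i : ℕ) then p.coeff (m + (i : ℕ) - (j : ℕ)) else 0)
        else
          (if (j : ℕ) ≤ ((i : ℕ) - n) + n then
            q.coeff (((i : ℕ) - n) + n - (j : ℕ)) else 0))) = 0
    rw [Fin.sum_univ_eq_sum_range (fun i : ℕ =>
      (if i < n then a.coeff (n - 1 - i) else b.coeff (m + n - 1 - i)) *
      (if i < n then
        (if (j : ℕ) ≤ m + i then p.coeff (m + i - (j : ℕ)) else 0)
      else
        (if (j : ℕ) ≤ (i - n) + n then q.coeff ((i - n) + n - (j : ℕ)) else 0)))]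
    rw [Finset.range_eq_Ico,
      ← Finset.sum_Ico_consecutive _ (Nat.zero_le n) (by omega : n ≤ m + n),
      ← Finset.range_eq_Ico, Finset.sum_Ico_eq_sum_range]
    have hB1 : ∑ i ∈ Finset.range n,
        (if i < n then a.coeff (n - 1 - i) else b.coeff (m + n - 1 - i)) *
        (if i < n then
          (if (j : ℕ) ≤ m + i then p.coeff (m + i - (j : ℕ)) else 0)
        else
          (if (j : ℕ) ≤ (i - n) + n then q.coeff ((i - n) + n - (j : ℕ)) else 0))
        = (a * p).coeff k := by
      rw [coeff_mul_eq_sum_range a p n k ha, ← Finset.sum_range_reflect]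
      refine Finset.sum_congr rfl fun i hi => ?_
      simp only [Finset.mem_range] at hi
      rw [if_pos (show n - 1 - i < n by omega), if_pos (show n - 1 - i < n by omega),
        show n - 1 - (n - 1 - i) = i by omega]
      by_cases hc : i ≤ k
      · rw [if_pos hc, if_pos (by omega), show m + (n - 1 - i) - (j : ℕ) = k - i by omega]
      · rw [if_neg hc, if_neg (by omega), mul_zero]
    have hB2 : ∑ i ∈ Finset.range (m + n - n),
        (if n + i < n then a.coeff (n - 1 - (n + i)) else b.coeff (m + n - 1 - (n + i))) *
        (if n + i < n then
          (if (j : ℕ) ≤ m + (n + i) then p.coeff (m + (n + i) - (j : ℕ)) else 0)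
        else
          (if (j : ℕ) ≤ ((n + i) - n) + n then q.coeff (((n + i) - n) + n - (j : ℕ)) else 0))
        = (b * q).coeff k := by
      rw [show m + n - n = m by omega,
        coeff_mul_eq_sum_range b q m k hb, ← Finset.sum_range_reflect]
      refine Finset.sum_congr rfl fun i hi => ?_
      simp only [Finset.mem_range] at hi
      rw [if_neg (show ¬ n + (m - 1 - i) < n by omega),
        if_neg (show ¬ n + (m - 1 - i) < n by omega),
        show n + (m - 1 - i) - n + n = n + (m - 1 - i) by omega,
        show m + n - 1 - (n + (m - 1 - i)) = i by omega]
      by_cases hc : i ≤ k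
      · rw [if_pos hc, if_pos (by omega),
          show n + (m - 1 - i) - (j : ℕ) = k - i by omega]
      · rw [if_neg hc, if_neg (by omega), mul_zero]
    rw [hB1, hB2, ← Polynomial.coeff_add, hab, Polynomial.coeff_zero]

lemma squarefree_of_sylvesterRes {K : Type*} [Field K] [CharZero K] {n : ℕ}
    (p : Polynomial K) (hm : p.Monic) (hdeg : p.natDegree = n)
    (h : sylvesterRes n (n - 1) p p.derivative ≠ 0) : Squarefree p := by
  intro x hx
  by_contra hux
  have hp0 : p ≠ 0 := hm.ne_zero
  have hx0 : x ≠ 0 := by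
    rintro rfl
    exact hp0 (zero_dvd_iff.mp (by simpa using hx))
  have hdx : 1 ≤ x.natDegree := by
    by_contra hd
    exact hux (Polynomial.isUnit_iff_degree_eq_zero.mpr
      (by rw [Polynomial.degree_eq_natDegree hx0]; norm_cast; omega))
  obtain ⟨y, hy⟩ := hx
  have hy0 : y ≠ 0 := by rintro rfl; rw [mul_zero] at hy; exact hp0 hy
  have hn2 : 2 ≤ n := by
    have := Polynomial.natDegree_mul (mul_ne_zero hx0 hx0) hy0
    rw [← hy, hdeg, Polynomial.natDegree_mul hx0 hx0] at this
    omega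
  have hq0 : p.derivative ≠ 0 := by
    intro hq
    have h3 := Polynomial.coeff_derivative p (n - 1)
    have hcn : p.coeff n = 1 := by rw [← hdeg]; exact hm.coeff_natDegree
    rw [hq, Polynomial.coeff_zero, show n - 1 + 1 = n by omega, hcn, one_mul] at h3
    exact Nat.cast_add_one_ne_zero (R := K) (n - 1) h3.symm
  have hdvd : x ∣ p.derivative := by
    refine ⟨Polynomial.derivative x * y + Polynomial.derivative x * y +
      x * Polynomial.derivative y, ?_⟩
    rw [hy]
    simp only [Polynomial.derivative_mul]
    ring
  obtain ⟨a, hqa⟩ := hdvd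
  have ha0 : a ≠ 0 := by rintro rfl; rw [mul_zero] at hqa; exact hq0 hqa
  have hqd : p.derivative.natDegree ≤ n - 1 := by
    have := Polynomial.natDegree_derivative_le p
    omega
  have hxa : x.natDegree + a.natDegree = p.derivative.natDegree := by
    rw [hqa, Polynomial.natDegree_mul hx0 ha0]
  have hxyd : x.natDegree + (x * y).natDegree = n := by
    have h4 : p.natDegree = (x * (x * y)).natDegree := by rw [mul_assoc] at hy; rw [← hy]
    rw [Polynomial.natDegree_mul hx0 (mul_ne_zero hx0 hy0)] at h4
    omega
  refine h (sylvesterRes_eq_zero n (n - 1) p p.derivative a (-(x * y))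
    (by omega) hqd (by omega) ?_ ha0 ?_)
  · rw [Polynomial.natDegree_neg]; omega
  · rw [hqa, hy]; ring

/-- The truncation `M_{<α}` of a matrix over `ℂ[[q]]` at energy `α`: every entry
is truncated modulo `q ^ α`, keeping only the coefficients of `q ^ d` for `d < α`. -/
noncomputable def truncMat {n : ℕ} (α : ℕ)
    (M : Matrix (Fin n) (Fin n) (PowerSeries ℂ)) :
    Matrix (Fin n) (Fin n) (PowerSeries ℂ) :=
  M.map fun f => ((PowerSeries.trunc α f : Polynomial ℂ) : PowerSeries ℂ)

/-- If `Δ(M) ≠ 0` with `q`-adic order `v`, then for every `α > v` the truncation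
`M_{<α}` has nonzero discriminant; in particular its characteristic polynomial is
squarefree over the Laurent series field `ℂ((q))`. -/
theorem truncation_simple_spectrum_of_simple_spectrum (n : ℕ)
    (M : Matrix (Fin n) (Fin n) (PowerSeries ℂ))
    (h0 : matDiscrim M ≠ 0) (v : ℕ) (hv : (matDiscrim M).order = (v : ℕ∞))
    (α : ℕ) (hα : v < α) :
    matDiscrim (truncMat α M) ≠ 0 ∧
      Squarefree ((truncMat α M).map
        (HahnSeries.ofPowerSeries ℤ ℂ)).charpoly := by
  classical
  set π := Ideal.Quotient.mk (Ideal.span {(PowerSeries.X : PowerSeries ℂ) ^ α}) with hπ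
  have hmap : (truncMat α M).map π = M.map π := by
    ext i j
    simp only [truncMat, Matrix.map_apply]
    rw [hπ, Ideal.Quotient.eq, Ideal.mem_span_singleton]
    rw [PowerSeries.X_pow_dvd_iff]
    intro d hd
    rw [map_sub, Polynomial.coeff_coe, PowerSeries.coeff_trunc, if_pos hd, sub_self]
  have key : (PowerSeries.X : PowerSeries ℂ) ^ α ∣
      matDiscrim (truncMat α M) - matDiscrim M := by
    rw [← Ideal.mem_span_singleton, ← Ideal.Quotient.eq]
    rw [← hπ, ← matDiscrim_map π (truncMat α M), ← matDiscrim_map π M, hmap]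
  have hc : PowerSeries.coeff v (matDiscrim (truncMat α M))
      = PowerSeries.coeff v (matDiscrim M) := by
    have h5 := PowerSeries.X_pow_dvd_iff.mp key v hα
    rw [map_sub, sub_eq_zero] at h5
    exact h5
  have hv0 : PowerSeries.coeff v (matDiscrim M) ≠ 0 :=
    (PowerSeries.order_eq_nat.mp hv).1
  have h1 : matDiscrim (truncMat α M) ≠ 0 := by
    intro hz
    exact hv0 (by rw [← hc, hz, map_zero])
  refine ⟨h1, ?_⟩
  have h2 : matDiscrim ((truncMat α M).map (HahnSeries.ofPowerSeries ℤ ℂ)) ≠ 0 := by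
    rw [matDiscrim_map]
    intro hz
    exact h1 (HahnSeries.ofPowerSeries_injective (by rw [hz, map_zero]))
  have : CharZero (PowerSeries ℂ) := RingHom.charZero (PowerSeries.constantCoeff (R := ℂ))
  have : CharZero (HahnSeries ℤ ℂ) :=
    (RingHom.charZero_iff (HahnSeries.ofPowerSeries_injective (Γ := ℤ) (R := ℂ))).mp
      inferInstance
  refine squarefree_of_sylvesterRes _ (Matrix.charpoly_monic _) ?_ h2
  rw [Matrix.charpoly_natDegree_eq_dim, Fintype.card_fin]
end

section
/- The complex 6×6 matrix M₀ with rows (0,0,0,0,4,0), (4,0,0,0,0,4), (0,4,0,0,0,0), (0,4,0,0,0,0), (0,0,4,4,0,0), (0,0,0,0,4,0) has characteristic polynomial X²·(X⁴ − 1024). Consequently its eigenvalues are 4√2, −4√2, 4√2·i, −4√2·i, and 0, where the eigenvalue 0 has algebraic multiplicity 2. -/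
/-!
Expanding `det (X - M0)` along its rows gives `X² (X⁴ - 1024)`. Since `1024 = a⁴` for
`a = 4√2`, the quartic factor splits over any domain containing a square root `i` of `-1` as
`(X - a)(X + a)(X - a i)(X + a i)`, which exhibits the roots.
-/

open Polynomial

/-- The matrix of quantum multiplication by `c₁ = 4σ₁` on `QH(Gr(2,4))` at `q = 1`,
in the basis of Schubert classes: the Dubrovin operator `K⁰` with zero bulk. -/
noncomputable def M0 : Matrix (Fin 6) (Fin 6) ℂ :=
  !![0, 0, 0, 0, 4, 0;
     4, 0, 0, 0, 0, 4;
     0, 4, 0, 0, 0, 0;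
     0, 4, 0, 0, 0, 0;
     0, 0, 4, 4, 0, 0;
     0, 0, 0, 0, 4, 0]

theorem X_pow_four_sub_C_eq_prod {R : Type*} [CommRing R] {i : R} (hi : i ^ 2 = -1) (a : R) :
    (X ^ 4 - C (a ^ 4) : R[X]) =
      (Multiset.map (fun r => X - C r) {a, -a, a * i, -(a * i)}).prod := by
  have hCi : C i ^ 2 = -1 := by rw [← map_pow, hi, map_neg, map_one]
  simp only [Multiset.insert_eq_cons, Multiset.map_cons, Multiset.map_singleton,
    Multiset.prod_cons, Multiset.prod_singleton, map_neg, map_mul, map_pow]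
  linear_combination (C a ^ 2 * X ^ 2 - C a ^ 4) * hCi

theorem roots_X_sq_mul_X_pow_four_sub_C {R : Type*} [CommRing R] [IsDomain R] {i : R}
    (hi : i ^ 2 = -1) (a : R) :
    (X ^ 2 * (X ^ 4 - C (a ^ 4)) : R[X]).roots = {a, -a, a * i, -(a * i), 0, 0} := by
  have hmonic : (X ^ 2 * (X ^ 4 - C (a ^ 4)) : R[X]).Monic :=
    (monic_X_pow 2).mul (monic_X_pow_sub_C _ four_ne_zero)
  rw [roots_mul hmonic.ne_zero, roots_X_pow, X_pow_four_sub_C_eq_prod hi,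
    roots_multiset_prod_X_sub_C, add_comm]
  rfl

theorem four_mul_sqrt_two_pow_four : (4 * (Real.sqrt 2 : ℂ)) ^ 4 = 1024 := by
  have hsq : (Real.sqrt 2 : ℂ) ^ 2 = 2 := by
    rw [← Complex.ofReal_pow, Real.sq_sqrt zero_le_two, Complex.ofReal_ofNat]
  linear_combination (16 * (Real.sqrt 2 : ℂ) ^ 2 + 32) * 16 * hsq

theorem charmatrix_M0 : M0.charmatrix =
    !![X, 0, 0, 0, -4, 0;
       -4, X, 0, 0, 0, -4;
       0, -4, X, 0, 0, 0;
       0, -4, 0, X, 0, 0;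
       0, 0, -4, -4, X, 0;
       0, 0, 0, 0, -4, X] :=
  Matrix.ext fun i j => by fin_cases i <;> fin_cases j <;> simp [M0, map_ofNat]

theorem charpoly_M0_eq_X_sq_mul : M0.charpoly = X ^ 2 * (X ^ 4 - C 1024) := by
  rw [Matrix.charpoly, charmatrix_M0]
  simp [Matrix.det_succ_row_zero, Fin.sum_univ_succ, Fin.succAbove, map_ofNat]
  ring

/-- `M0` has characteristic polynomial `X² (X⁴ - 1024)`; consequently its
eigenvalues are `±4√2`, `±4√2 i` and `0`, with `0` of algebraic multiplicity `2`. -/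
theorem charpoly_M0 :
    M0.charpoly = Polynomial.X ^ 2 * (Polynomial.X ^ 4 - Polynomial.C 1024) ∧
    M0.charpoly.roots =
      {4 * (Real.sqrt 2 : ℂ), -(4 * (Real.sqrt 2 : ℂ)),
       4 * (Real.sqrt 2 : ℂ) * Complex.I, -(4 * (Real.sqrt 2 : ℂ) * Complex.I),
       0, 0} := by
  refine ⟨charpoly_M0_eq_X_sq_mul, ?_⟩
  rw [charpoly_M0_eq_X_sq_mul, ← four_mul_sqrt_two_pow_four,
    roots_X_sq_mul_X_pow_four_sub_C Complex.I_sq]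
end
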